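/- Equidistance signs for C (Corollary to Theorem 4): Let c(x) = h_1(x)···h_k(x) (k > 1) be a product of k distinct monic irreducible divisors of x^n − 1 over GF(q), where h_i has degree m_i > 1 and order n_i ≠ q^{m_i} − 1 for each i, and let n_c = ord(c) = lcm(n_1, …, n_k). Let C be the set of all elements of A_n with minimal polynomial c, let R_c be the number of proportionality classes of C and s_c = R_c·(q − 1)/n_c the number of cycles of C, and set d_c = gcd(q − 1, n_c), r_c = n_c/d_c, b_c = (q − 1)/d_c. If at least one of the conditions s_c = b_c, r_c = R_c, or gcd(s_c, R_c) = 1 holds, then all vectors of C have the same Hamming weight. -/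

import Mathlib

open Polynomial

namespace CyclicCode

open scoped Classical

variable (F : Type) [Field F] [Fintype F]

/-- The ambient algebra `A_n = GF(q)[x]/(x^n - 1)`. -/
abbrev An (n : ℕ) := AdjoinRoot (X ^ n - 1 : F[X])

/-- The image of `x` in `A_n`. -/
noncomputable def xbar (n : ℕ) : An F n := AdjoinRoot.root _

variable {F}

/-- The proportionality class `P_z = {α • z : α ∈ GF(q)^*}` of `z`. -/
def propClass {n : ℕ} (z : An F n) : Set (An F n) :=
  {w | ∃ α : F, α ≠ 0 ∧ w = α • z}

/-- The cycle `{x^j • z : j}` of `z`. -/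
noncomputable def cyc {n : ℕ} (z : An F n) : Set (An F n) :=
  {w | ∃ j : ℕ, w = xbar F n ^ j * z}

/-- The period of `z`: the least positive `e` with `x^e * z = z`. -/
noncomputable def period {n : ℕ} (z : An F n) : ℕ :=
  sInf {e : ℕ | 0 < e ∧ xbar F n ^ e * z = z}

/-- The order of a polynomial `f`: the least positive `e` with `f ∣ X^e - 1`. -/
noncomputable def polyOrder {F : Type} [Field F] (f : F[X]) : ℕ :=
  sInf {e : ℕ | 0 < e ∧ f ∣ X ^ e - 1}

/-- The representative of degree `< n` of an element of `A_n`. -/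
noncomputable def rep {n : ℕ} (z : An F n) : F[X] :=
  if h : (X ^ n - 1 : F[X]).Monic then AdjoinRoot.modByMonicHom h z else 0

/-- The Hamming weight of an element of `A_n`. -/
noncomputable def wt {n : ℕ} (z : An F n) : ℕ := (rep z).support.card

/-- `c` is the minimal polynomial of `z ∈ A_n`: a polynomial annihilates `z`
iff it is a multiple of `c`. -/
def HasMinPoly {n : ℕ} (z : An F n) (c : F[X]) : Prop :=
  ∀ f : F[X], AdjoinRoot.mk (X ^ n - 1 : F[X]) f * z = 0 ↔ c ∣ f

/-- The cyclic code of length `n` with parity-check polynomial `h`: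
the ideal of `A_n` generated by `(X^n - 1)/h`. -/
noncomputable def code (F : Type) [Field F] (n : ℕ) (h : F[X]) : Ideal (An F n) :=
  Ideal.span {AdjoinRoot.mk (X ^ n - 1 : F[X]) ((X ^ n - 1) / h)}

/-- The proportionality classes meeting a set `C`. -/
def classesOf {n : ℕ} (C : Set (An F n)) : Set (Set (An F n)) :=
  {P | ∃ z ∈ C, P = propClass z}

/-- The cycles meeting a set `C`. -/
noncomputable def cyclesOf {n : ℕ} (C : Set (An F n)) : Set (Set (An F n)) :=
  {S | ∃ z ∈ C, S = cyc z}

/-- The minimum Hamming distance of a linear code `J ⊆ A_n`. -/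
noncomputable def minDist {n : ℕ} (J : Ideal (An F n)) : ℕ :=
  sInf {k : ℕ | ∃ z ∈ J, z ≠ 0 ∧ wt z = k}

/-- The multiplicative order of `q` modulo `n`. -/
noncomputable def multOrder (q n : ℕ) : ℕ :=
  sInf {e : ℕ | 0 < e ∧ q ^ e ≡ 1 [MOD n]}

/-!
Multiplication by `α xʲ` preserves Hamming weight, so it suffices that the group `H` of
weight-preserving units of `A_n` acts transitively on `C`. All elements of `C` have the same
annihilator, hence the same stabilizer in `H`, so the `H`-orbits in `C` have a common size `o`
and `|C| = t o` with `t` the number of orbits. Within an orbit `GF(q)^*` acts freely and `⟨x⟩`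
has cycles of length `n_c`, so `lcm(q - 1, n_c) ∣ o`. Together with `|C| = R_c (q - 1)` this
gives `R_c = t u r_c` and `s_c = t u b_c` for some `u`, and each of the three conditions forces
`t u = 1`.
-/

open MulAction

theorem _root_.MulAction.ncard_eq_ncard_image_orbit_mul {G X : Type*} [Group G] [MulAction G X]
    {s : Set X} (hs : s.Finite) (hinv : ∀ g : G, ∀ x ∈ s, g • x ∈ s) {o : ℕ}
    (ho : ∀ x ∈ s, (orbit G x).ncard = o) :
    s.ncard = (orbit G '' s).ncard * o := by
  have horb : ∀ x ∈ s, orbit G x ⊆ s := by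
    rintro x hx _ ⟨g, rfl⟩
    exact hinv g x hx
  rw [← hs.coe_toFinset, Set.ncard_coe_finset, ← Finset.coe_image, Set.ncard_coe_finset,
    Finset.card_eq_sum_card_image (orbit G)]
  refine Finset.sum_const_nat fun O hO => ?_
  obtain ⟨x, hx, rfl⟩ := Finset.mem_image.mp hO
  rw [hs.mem_toFinset] at hx
  rw [← ho x hx, ← Set.ncard_coe_finset]
  congr 1
  ext y
  simp only [Finset.coe_filter, Set.Finite.mem_toFinset, Set.mem_ofPred_eq]
  exact ⟨fun ⟨_, hy⟩ => hy ▸ mem_orbit_self y,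
    fun hy => ⟨horb x hx hy, orbit_eq_iff.mpr hy⟩⟩

theorem _root_.MulAction.ncard_orbit_units_of_ne_zero {K V : Type*} [Field K] [AddCommGroup V]
    [Module K V] {v : V} (hv : v ≠ 0) : (orbit Kˣ v).ncard = Nat.card K - 1 := by
  rw [← Nat.card_units]
  exact Set.ncard_range_of_injective fun α β h => Units.ext (smul_left_injective K hv h)

theorem _root_.MulAction.mem_orbit_of_ncard_image_orbit_eq_one {G X : Type*} [Group G]
    [MulAction G X] {s : Set X} (hs : (orbit G '' s).ncard = 1) {x y : X} (hx : x ∈ s)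
    (hy : y ∈ s) : y ∈ orbit G x := by
  obtain ⟨O, hO⟩ := Set.ncard_eq_one.mp hs
  have hxO : orbit G x ∈ ({O} : Set _) := hO ▸ Set.mem_image_of_mem (orbit G) hx
  have hyO : orbit G y ∈ ({O} : Set _) := hO ▸ Set.mem_image_of_mem (orbit G) hy
  exact orbit_eq_iff.mp (hyO.trans hxO.symm)

-- With `a = q - 1`, `b = n_c` and `R = R_c`, the disjuncts of `hcond` read
-- `s_c = b_c`, `r_c = R_c` and `gcd(s_c, R_c) = 1`.
theorem eq_one_of_equidistance_sign {a b R t o : ℕ} (ha : 0 < a) (hb : 0 < b)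
    (hR : R * a = t * o) (ho : Nat.lcm a b ∣ o)
    (hcond : R * a / b = a / Nat.gcd a b ∨ b / Nat.gcd a b = R ∨ Nat.gcd (R * a / b) R = 1) :
    t = 1 := by
  set g := Nat.gcd a b
  obtain ⟨u, rfl⟩ := ho
  have hga : g ∣ a := Nat.gcd_dvd_left a b
  have hgb : g ∣ b := Nat.gcd_dvd_right a b
  have hg : 0 < g := Nat.gcd_pos_of_pos_left b ha
  have hR' : R = t * u * (b / g) := by
    refine Nat.eq_of_mul_eq_mul_right ha ?_
    rw [hR, Nat.lcm, Nat.mul_div_assoc a hgb]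
    ring
  have hsc : R * a / b = t * u * (a / g) := by
    rw [hR, Nat.lcm, Nat.mul_comm a b, Nat.mul_div_assoc b hga]
    exact Nat.div_eq_of_eq_mul_left hb (by ring)
  suffices t * u = 1 from Nat.eq_one_of_mul_eq_one_right this
  rw [hsc, hR'] at hcond
  rcases hcond with h | h | h
  · exact (Nat.mul_eq_right (Nat.div_pos (Nat.le_of_dvd ha hga) hg).ne').mp h
  · exact (Nat.mul_eq_right (Nat.div_pos (Nat.le_of_dvd hb hgb) hg).ne').mp h.symm
  · rw [Nat.gcd_mul_left] at h
    exact Nat.eq_one_of_mul_eq_one_right h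

section Weight

variable {F : Type} [Field F] {n : ℕ}

theorem xbar_pow_self : xbar F n ^ n = 1 := by
  have h := AdjoinRoot.eval₂_root (X ^ n - 1 : F[X])
  rwa [eval₂_sub, eval₂_X_pow, eval₂_one, sub_eq_zero] at h

theorem monic_X_pow_sub_one (hn : n ≠ 0) : (X ^ n - 1 : F[X]).Monic := by
  simpa using monic_X_pow_sub_C (1 : F) hn

theorem mk_rep (hn : n ≠ 0) (z : An F n) : AdjoinRoot.mk (X ^ n - 1 : F[X]) (rep z) = z := by
  rw [rep, dif_pos (monic_X_pow_sub_one hn)]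
  exact AdjoinRoot.mk_leftInverse _ z

theorem wt_mk_of_degree_lt (hn : n ≠ 0) {f : F[X]} (hf : f.degree < n) :
    wt (AdjoinRoot.mk (X ^ n - 1 : F[X]) f) = f.support.card := by
  have hmonic := monic_X_pow_sub_one (F := F) hn
  rw [wt, rep, dif_pos hmonic, AdjoinRoot.modByMonicHom_mk,
    (modByMonic_eq_self_iff hmonic).mpr ?_]
  rwa [show (X ^ n - 1 : F[X]) = X ^ n - C 1 by simp, degree_X_pow_sub_C (Nat.pos_of_ne_zero hn)]

theorem wt_mk_le (hn : n ≠ 0) (f : F[X]) :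
    wt (AdjoinRoot.mk (X ^ n - 1 : F[X]) f) ≤ f.support.card := by
  -- reducing each `X ^ k` to `X ^ (k % n)` folds `f` onto a polynomial of degree `< n`
  set g := ∑ k ∈ f.support, monomial (k % n) (f.coeff k)
  have hfg : AdjoinRoot.mk (X ^ n - 1 : F[X]) f = AdjoinRoot.mk (X ^ n - 1) g := by
    conv_lhs => rw [f.as_sum_support]
    simp only [g, map_sum, ← C_mul_X_pow_eq_monomial, map_mul, map_pow, AdjoinRoot.mk_X]
    refine Finset.sum_congr rfl fun k _ => ?_
    exact congrArg _ (pow_eq_pow_mod k xbar_pow_self)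
  have hg : g.degree < n := by
    rw [← mem_degreeLT]
    refine Submodule.sum_mem _ fun k _ => mem_degreeLT.mpr ?_
    exact (degree_monomial_le _ _).trans_lt
      (by exact_mod_cast Nat.mod_lt k (Nat.pos_of_ne_zero hn))
  have hsupp : g.support ⊆ f.support.image (· % n) := by
    intro m hm
    rw [mem_support_iff, finsetSum_coeff] at hm
    obtain ⟨k, hk, hne⟩ := Finset.exists_ne_zero_of_sum_ne_zero hm
    rw [coeff_monomial] at hne
    exact Finset.mem_image.mpr ⟨k, hk, by_contra fun h => hne (if_neg h)⟩
  rw [hfg, wt_mk_of_degree_lt hn hg]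
  exact (Finset.card_le_card hsupp).trans Finset.card_image_le

theorem wt_xbar_mul_le (hn : n ≠ 0) (z : An F n) : wt (xbar F n * z) ≤ wt z := by
  conv_lhs => rw [← mk_rep hn z, xbar, ← AdjoinRoot.mk_X, ← map_mul]
  refine (wt_mk_le hn _).trans ?_
  simpa [wt] using card_support_mul_le (p := X) (q := rep z)

theorem wt_xbar_mul (hn : n ≠ 0) (z : An F n) : wt (xbar F n * z) = wt z := by
  have hpow : ∀ j (y : An F n), wt (xbar F n ^ j * y) ≤ wt y := by
    intro j
    induction j with
    | zero => simp
    | succ j ih =>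
      intro y
      rw [pow_succ', mul_assoc]
      exact (wt_xbar_mul_le hn _).trans (ih y)
  refine (wt_xbar_mul_le hn z).antisymm ?_
  calc wt z = wt (xbar F n ^ (n - 1) * (xbar F n * z)) := by
        rw [← mul_assoc, ← pow_succ, Nat.sub_add_cancel (Nat.pos_of_ne_zero hn), xbar_pow_self,
          one_mul]
    _ ≤ wt (xbar F n * z) := hpow _ _

theorem wt_smul {α : F} (hα : α ≠ 0) (z : An F n) : wt (α • z) = wt z := by
  have hrep : rep (α • z) = α • rep z := by
    unfold rep; split_ifs <;> simp
  rw [wt, wt, hrep]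
  congr 1
  ext i
  simp [hα]

end Weight

section Monomial

variable (F : Type) [Field F]

noncomputable def xbarUnit {n : ℕ} (hn : n ≠ 0) : (An F n)ˣ :=
  Units.ofPowEqOne (xbar F n) n xbar_pow_self hn

def weightPreservingUnits (n : ℕ) : Subgroup (An F n)ˣ where
  carrier := {u | ∀ z, wt ((u : An F n) * z) = wt z}
  mul_mem' {u v} hu hv z := by rw [Units.val_mul, mul_assoc, hu, hv]
  one_mem' z := by rw [Units.val_one, one_mul]
  inv_mem' {u} hu z := by rw [← hu, ← mul_assoc, Units.mul_inv, one_mul]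

variable {F} {n : ℕ}

theorem xbarUnit_mem_weightPreservingUnits (hn : n ≠ 0) :
    xbarUnit F hn ∈ weightPreservingUnits F n :=
  wt_xbar_mul hn

theorem units_map_algebraMap_mem_weightPreservingUnits (α : Fˣ) :
    Units.map (algebraMap F (An F n)).toMonoidHom α ∈ weightPreservingUnits F n := fun z => by
  simpa [Algebra.smul_def] using wt_smul α.ne_zero z

end Monomial

section MinPoly

variable {F : Type} [Field F] {n : ℕ} {c : F[X]} {z w : An F n}

theorem units_smul_eq_units_map_smul (α : Fˣ) (z : An F n) :
    α • z = Units.map (algebraMap F (An F n)).toMonoidHom α • z := by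
  simp [Units.smul_def, Algebra.smul_def]

theorem orbit_units_eq_propClass (z : An F n) : orbit Fˣ z = propClass z := by
  ext w
  constructor
  · rintro ⟨α, rfl⟩
    exact ⟨α, α.ne_zero, rfl⟩
  · rintro ⟨α, hα, rfl⟩
    exact ⟨Units.mk0 α hα, rfl⟩

theorem HasMinPoly.eq_zero_iff (hz : HasMinPoly z c) : z = 0 ↔ IsUnit c := by
  rw [isUnit_iff_dvd_one, ← hz 1, map_one, one_mul]

theorem HasMinPoly.units_smul (hz : HasMinPoly z c) (u : (An F n)ˣ) : HasMinPoly (u • z) c :=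
  fun f => by rw [Units.smul_def, smul_eq_mul, mul_left_comm, Units.mul_right_eq_zero, hz]

theorem HasMinPoly.mul_eq_zero_iff (hz : HasMinPoly z c) (hw : HasMinPoly w c) (a : An F n) :
    a * z = 0 ↔ a * w = 0 := by
  obtain ⟨f, rfl⟩ := AdjoinRoot.mk_surjective a
  rw [hz, hw]

theorem HasMinPoly.stabilizer_eq (hz : HasMinPoly z c) (hw : HasMinPoly w c)
    (H : Subgroup (An F n)ˣ) : stabilizer H z = stabilizer H w := by
  have hfix : ∀ (u : H) (v : An F n), u • v = v ↔ ((u : (An F n)ˣ) - 1 : An F n) * v = 0 :=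
    fun u v => by
      rw [sub_mul, one_mul, sub_eq_zero]
      rfl
  ext u
  rw [mem_stabilizer_iff, mem_stabilizer_iff, hfix, hfix, hz.mul_eq_zero_iff hw]

theorem HasMinPoly.xbar_pow_mul_eq_self_iff (hz : HasMinPoly z c) (e : ℕ) :
    xbar F n ^ e * z = z ↔ c ∣ X ^ e - 1 := by
  rw [← hz, map_sub, map_pow, map_one, AdjoinRoot.mk_X, sub_mul, one_mul, sub_eq_zero]
  rfl

theorem HasMinPoly.minimalPeriod_xbarUnit (hz : HasMinPoly z c) (hn : n ≠ 0) :
    Function.minimalPeriod (xbarUnit F hn • ·) z = polyOrder c := by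
  rw [Function.minimalPeriod_eq_sInf_n_pos_IsPeriodicPt, polyOrder]
  congr 1
  ext e
  rw [Set.mem_ofPred_eq, Set.mem_ofPred_eq, Function.IsPeriodicPt, Function.IsFixedPt,
    smul_iterate, ← hz.xbar_pow_mul_eq_self_iff]
  rfl

theorem HasMinPoly.ncard_orbit_zpowers_xbarUnit (hz : HasMinPoly z c) (hn : n ≠ 0) :
    (orbit (Subgroup.zpowers (xbarUnit F hn)) z).ncard = polyOrder c := by
  rw [← Nat.card_coe_set_eq, Nat.card_congr (orbitZPowersEquiv _ _), Nat.card_zmod,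
    hz.minimalPeriod_xbarUnit hn]

end MinPoly

section Counting

variable {F : Type} [Field F] [Finite F] {n : ℕ} {c : F[X]} {z : An F n}

theorem finite_An (hn : n ≠ 0) : Finite (An F n) :=
  have := (AdjoinRoot.powerBasis (monic_X_pow_sub_one (F := F) hn).ne_zero).finite
  Module.finite_of_finite F

theorem ncard_eq_ncard_classesOf_mul (hn : n ≠ 0) (hc : ¬IsUnit c) :
    {w : An F n | HasMinPoly w c}.ncard =
      (classesOf {w : An F n | HasMinPoly w c}).ncard * (Nat.card F - 1) := by
  have := finite_An (F := F) hn
  have hclasses : classesOf {w : An F n | HasMinPoly w c} = orbit Fˣ '' {w | HasMinPoly w c} := by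
    ext P
    simp only [classesOf, Set.mem_image, orbit_units_eq_propClass, eq_comm]
    rfl
  rw [hclasses]
  refine ncard_eq_ncard_image_orbit_mul (Set.toFinite _) (fun α v hv => ?_) fun v hv => ?_
  · rw [units_smul_eq_units_map_smul]
    exact HasMinPoly.units_smul hv _
  · exact ncard_orbit_units_of_ne_zero (mt (HasMinPoly.eq_zero_iff hv).mp hc)

theorem ncard_eq_ncard_image_orbit_mul_ncard_orbit (hn : n ≠ 0) (hz : HasMinPoly z c) :
    {w : An F n | HasMinPoly w c}.ncard =
      (orbit (weightPreservingUnits F n) '' {w : An F n | HasMinPoly w c}).ncard *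
        (orbit (weightPreservingUnits F n) z).ncard := by
  have := finite_An (F := F) hn
  refine ncard_eq_ncard_image_orbit_mul (G := weightPreservingUnits F n) (Set.toFinite _)
    (fun u v (hv : HasMinPoly v c) => hv.units_smul (u : (An F n)ˣ)) fun v hv => ?_
  rw [← index_stabilizer, ← index_stabilizer, HasMinPoly.stabilizer_eq hv hz]

theorem lcm_dvd_ncard_orbit (hn : n ≠ 0) (hz : HasMinPoly z c) (hc : ¬IsUnit c) :
    Nat.lcm (Nat.card F - 1) (polyOrder c) ∣ (orbit (weightPreservingUnits F n) z).ncard := by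
  have := finite_An (F := F) hn
  set H := weightPreservingUnits F n
  have hO : ∀ v ∈ orbit H z, HasMinPoly v c := by
    rintro _ ⟨u, rfl⟩
    exact hz.units_smul u
  have hinv : ∀ u ∈ H, ∀ v ∈ orbit H z, u • v ∈ orbit H z := fun u hu v hv =>
    mem_orbit_of_mem_orbit (⟨u, hu⟩ : H) hv
  have hscalar : (orbit H z).ncard = (orbit Fˣ '' orbit H z).ncard * (Nat.card F - 1) := by
    refine ncard_eq_ncard_image_orbit_mul (Set.toFinite _) (fun α v hv => ?_)
      fun v hv => ncard_orbit_units_of_ne_zero (mt (hO v hv).eq_zero_iff.mp hc)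
    rw [units_smul_eq_units_map_smul]
    exact hinv _ (units_map_algebraMap_mem_weightPreservingUnits α) v hv
  have hcyclic : (orbit H z).ncard =
      (orbit (Subgroup.zpowers (xbarUnit F hn)) '' orbit H z).ncard * polyOrder c :=
    ncard_eq_ncard_image_orbit_mul (G := Subgroup.zpowers (xbarUnit F hn)) (Set.toFinite _)
      (fun g v hv => hinv g.1
        (Subgroup.zpowers_le.mpr (xbarUnit_mem_weightPreservingUnits hn) g.2) v hv)
      fun v hv => (hO v hv).ncard_orbit_zpowers_xbarUnit hn
  exact Nat.lcm_dvd (Dvd.intro_left _ hscalar.symm) (Dvd.intro_left _ hcyclic.symm)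

end Counting

theorem stmt16_general {F : Type} [Field F] [Fintype F] (q n : ℕ)
    (hcard : Fintype.card F = q) (hn : 0 < n)
    (c : F[X])
    (nc Rc sc dc rc bc : ℕ) (hnc : nc = polyOrder c)
    (hRc : Rc = Set.ncard (classesOf {z : An F n | HasMinPoly z c}))
    (hsc : sc = Rc * (q - 1) / nc)
    (hdc : dc = Nat.gcd (q - 1) nc) (hrc : rc = nc / dc) (hbc : bc = (q - 1) / dc)
    (hcond : sc = bc ∨ rc = Rc ∨ Nat.gcd sc Rc = 1) :
    ∀ z : An F n, HasMinPoly z c → ∀ w : An F n, HasMinPoly w c → wt z = wt w := by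
  intro z hz w hw
  by_cases hc : IsUnit c
  · rw [hz.eq_zero_iff.mpr hc, hw.eq_zero_iff.mpr hc]
  have := finite_An (F := F) hn.ne'
  set H := weightPreservingUnits F n
  have hq : Nat.card F - 1 = q - 1 := by rw [Nat.card_eq_fintype_card, hcard]
  have hq1 : 0 < q - 1 := by have := Fintype.one_lt_card (α := F); omega
  have hnc0 : 0 < nc := by
    rw [hnc, ← hz.ncard_orbit_zpowers_xbarUnit hn.ne']
    exact (Set.ncard_pos (Set.toFinite _)).mpr ⟨z, mem_orbit_self z⟩
  subst hsc hdc hrc hbc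
  have hcount : Rc * (q - 1) =
      (orbit H '' {w : An F n | HasMinPoly w c}).ncard * (orbit H z).ncard := by
    rw [hRc, ← hq, ← ncard_eq_ncard_classesOf_mul hn.ne' hc,
      ncard_eq_ncard_image_orbit_mul_ncard_orbit hn.ne' hz]
  have hlcm : Nat.lcm (q - 1) nc ∣ (orbit H z).ncard := by
    rw [hnc, ← hq]
    exact lcm_dvd_ncard_orbit hn.ne' hz hc
  obtain ⟨u, rfl⟩ := mem_orbit_of_ncard_image_orbit_eq_one
    (eq_one_of_equidistance_sign hq1 hnc0 hcount hlcm hcond) hz hw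
  exact (u.2 z).symm

/-- Equidistance signs, Corollary to Theorem 4: let `c` be a
product of `k > 1` distinct monic irreducible divisors of `x^n - 1`, each of
degree `> 1` and of nonprimitive order, `n_c = ord(c)`, `C` the set of all
elements of `A_n` with minimal polynomial `c`, `R_c` the number of
proportionality classes of `C`, `s_c = R_c(q - 1)/n_c`, `d_c = gcd(q - 1, n_c)`,
`r_c = n_c/d_c`, `b_c = (q - 1)/d_c`. If `s_c = b_c` or `r_c = R_c` or
`gcd(s_c, R_c) = 1`, then all vectors of `C` have the same Hamming weight. -/
theorem stmt16 {F : Type} [Field F] [Fintype F] (q n k : ℕ)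
    (hcard : Fintype.card F = q) (hq : 2 < q) (hn : 0 < n) (hco : Nat.Coprime n q)
    (S : Finset F[X]) (hk : 1 < k) (hcardS : S.card = k)
    (hS : ∀ p ∈ S, p.Monic ∧ Irreducible p ∧ p ∣ (X ^ n - 1 : F[X]) ∧
      1 < p.natDegree ∧ polyOrder p ≠ q ^ p.natDegree - 1)
    (c : F[X]) (hc : c = S.prod id)
    (nc Rc sc dc rc bc : ℕ) (hnc : nc = polyOrder c)
    (hRc : Rc = Set.ncard (classesOf {z : An F n | HasMinPoly z c}))
    (hsc : sc = Rc * (q - 1) / nc)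
    (hdc : dc = Nat.gcd (q - 1) nc) (hrc : rc = nc / dc) (hbc : bc = (q - 1) / dc)
    (hcond : sc = bc ∨ rc = Rc ∨ Nat.gcd sc Rc = 1) :
    ∀ z : An F n, HasMinPoly z c → ∀ w : An F n, HasMinPoly w c → wt z = wt w :=
  stmt16_general q n hcard hn c nc Rc sc dc rc bc hnc hRc hsc hdc hrc hbc hcond

end CyclicCode
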